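/- arXiv:2605.03374 — 2 statements merged into one kernel-verified Lean document; each statement's English description precedes it below -/
import Mathlib

section
/- Over the box [0,1] × [0,U] with U > 0, the McCormick relaxation of the bilinear graph {(x, y, xy) : 0 ≤ x ≤ 1, 0 ≤ y ≤ U} equals its convex hull. That is, a point (x, y, w) with 0 ≤ x ≤ 1 and 0 ≤ y ≤ U satisfies 0 ≤ w, w ≤ Ux, w ≤ y, and w ≥ y − U(1−x) if and only if (x, y, w) lies in the convex hull of {(x, y, xy) : 0 ≤ x ≤ 1, 0 ≤ y ≤ U}. -/
/-!
The McCormick inequalities are linear, so they cut out a convex set containing the graph,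
hence its convex hull. Conversely, a point `(x, y, w)` of the relaxation is the convex combination
of the four corners `(0,0,0), (1,0,0), (0,U,0), (1,U,U)` with weights
`(U - Ux - y + w)/U, (Ux - w)/U, (y - w)/U, w/U`: the numerators are exactly the slacks of the
four McCormick inequalities, so the weights are nonnegative.
-/

/-- The bilinear graph `{(x, y, xy) : 0 ≤ x ≤ 1, 0 ≤ y ≤ U}` in `ℝ × ℝ × ℝ`. -/
def bilinearGraph (U : ℝ) : Set (ℝ × ℝ × ℝ) :=
  {p | ∃ x y : ℝ, 0 ≤ x ∧ x ≤ 1 ∧ 0 ≤ y ∧ y ≤ U ∧ p = (x, y, x * y)}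

def mccormickRelaxation (U : ℝ) : Set (ℝ × ℝ × ℝ) :=
  {p | 0 ≤ p.2.2 ∧ p.2.2 ≤ U * p.1 ∧ p.2.2 ≤ p.2.1 ∧ p.2.1 - U * (1 - p.1) ≤ p.2.2}

theorem convex_mccormickRelaxation (U : ℝ) : Convex ℝ (mccormickRelaxation U) := by
  rintro ⟨x, y, w⟩ ⟨h₁, h₂, h₃, h₄⟩ ⟨x', y', w'⟩ ⟨h₁', h₂', h₃', h₄'⟩ a b ha hb hab
  refine ⟨?_, ?_, ?_, ?_⟩ <;> simp only [Prod.smul_mk, Prod.mk_add_mk, smul_eq_mul] at *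
  · linear_combination a * h₁ + b * h₁'
  · linear_combination a * h₂ + b * h₂'
  · linear_combination a * h₃ + b * h₃'
  · linear_combination a * h₄ + b * h₄' + U * hab

theorem bilinearGraph_subset_mccormickRelaxation (U : ℝ) :
    bilinearGraph U ⊆ mccormickRelaxation U := by
  rintro _ ⟨x, y, hx₀, hx₁, hy₀, hyU, rfl⟩
  refine ⟨mul_nonneg hx₀ hy₀, ?_, ?_, ?_⟩ <;> dsimp only
  · nlinarith
  · nlinarith
  · nlinarith [mul_nonneg (sub_nonneg.2 hx₁) (sub_nonneg.2 hyU)]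

theorem mccormickRelaxation_subset_convexHull {U : ℝ} (hU : 0 < U) :
    mccormickRelaxation U ⊆ convexHull ℝ (bilinearGraph U) := by
  rintro ⟨x, y, w⟩ ⟨h₁, h₂, h₃, h₄⟩
  dsimp only at h₁ h₂ h₃ h₄
  let corner : Fin 4 → ℝ × ℝ × ℝ := ![(0, 0, 0), (1, 0, 0), (0, U, 0), (1, U, U)]
  let slack : Fin 4 → ℝ := ![U - U * x - y + w, U * x - w, y - w, w]
  have corner_mem : ∀ i, corner i ∈ bilinearGraph U := by
    intro i
    fin_cases i
    · exact ⟨0, 0, by simp [corner, hU.le]⟩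
    · exact ⟨1, 0, by simp [corner, hU.le]⟩
    · exact ⟨0, U, by simp [corner, hU.le]⟩
    · exact ⟨1, U, by simp [corner, hU.le]⟩
  have slack_nonneg : ∀ i, 0 ≤ slack i := by
    intro i
    fin_cases i <;> simp only [slack, Fin.reduceFinMk, Matrix.cons_val] <;> linarith
  have sum_weight : ∑ i, U⁻¹ * slack i = 1 := by
    simp only [Fin.sum_univ_four, slack, Matrix.cons_val]
    field_simp
    ring
  have sum_weight_smul : ∑ i, (U⁻¹ * slack i) • corner i = (x, y, w) := by
    simp only [Fin.sum_univ_four, slack, corner, Matrix.cons_val, Prod.smul_mk, smul_eq_mul,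
      Prod.mk_add_mk]
    ext <;> field_simp <;> ring
  rw [← sum_weight_smul]
  exact (convex_convexHull ℝ _).sum_mem (fun i _ => mul_nonneg (inv_nonneg.2 hU.le) (slack_nonneg i))
    sum_weight (fun i _ => subset_convexHull ℝ _ (corner_mem i))

theorem convexHull_bilinearGraph {U : ℝ} (hU : 0 < U) :
    convexHull ℝ (bilinearGraph U) = mccormickRelaxation U :=
  (convexHull_min (bilinearGraph_subset_mccormickRelaxation U)
    (convex_mccormickRelaxation U)).antisymm (mccormickRelaxation_subset_convexHull hU)

/-- over the box `[0,1] × [0,U]` with `U > 0`, the McCormick relaxation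
of the bilinear graph equals its convex hull. -/
theorem mccormick_eq_convexHull (U : ℝ) (hU : 0 < U) :
    ∀ x y w : ℝ, 0 ≤ x → x ≤ 1 → 0 ≤ y → y ≤ U →
      ((0 ≤ w ∧ w ≤ U * x ∧ w ≤ y ∧ y - U * (1 - x) ≤ w) ↔
        (x, y, w) ∈ convexHull ℝ (bilinearGraph U)) := by
  intro x y w _ _ _ _
  rw [convexHull_bilinearGraph hU]
  rfl
end

section
/- Conversely to the block decomposition: given 1 = t_1 < t_2 < ⋯ < t_{K+1} = T+1 and alternating block values starting with some v_1 ∈ {0,1} (with the convention y_0 = 0 forcing v_1 = 0 or a start-up at t_1), if every online block [t_k, t_{k+1}−1] with value 1 that is followed by a value-0 block has length t_{k+1} − t_k ≥ L, and every offline block with value 0 that is followed by a value-1 block and is not the initial block has length ≥ l, then the induced trajectory y satisfies the time-indexed minimum up/down constraints Σ_{τ=t−L+1}^{t} u_τ ≤ y_t for all t ≥ L and Σ_{τ=t−l+1}^{t} d_τ ≤ 1 − y_t for all t ≥ l, where u_t = max(y_t − y_{t−1}, 0) and d_t = max(y_{t−1} − y_t, 0). -/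
lemma sum_le_one_of_unique {s : Finset ℕ} {f : ℕ → ℕ}
    (h1 : ∀ τ ∈ s, f τ ≤ 1)
    (h2 : ∀ τ1 ∈ s, ∀ τ2 ∈ s, f τ1 ≠ 0 → f τ2 ≠ 0 → τ1 = τ2) :
    ∑ τ ∈ s, f τ ≤ 1 := by
  by_cases h : ∃ τ0 ∈ s, f τ0 ≠ 0
  · obtain ⟨τ0, hτ0, hne⟩ := h
    have hsum : ∑ τ ∈ s, f τ = f τ0 := by
      apply Finset.sum_eq_single_of_mem _ hτ0
      intro b hb hbne
      by_contra hb0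
      exact hbne (h2 b hb τ0 hτ0 hb0 hne)
    rw [hsum]; exact h1 τ0 hτ0
  · push_neg at h
    have hsum : ∑ τ ∈ s, f τ = 0 := Finset.sum_eq_zero h
    omega

/-- given a block structure `1 = t₁ < t₂ < ⋯ < t_{K+1} = T+1` with
alternating block values `v k ∈ {0,1}` such that every online block followed by a
further block has length `≥ L`, and every offline block that is not initial and is
followed by a further block has length `≥ l`, the induced trajectory `y` satisfies
the time-indexed minimum up/down-time constraints with start-up indicators
`u_τ = y τ − y (τ−1)` and shut-down indicators `d_τ = y (τ−1) − y τ`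
(truncated ℕ-subtraction realizes `max(·, 0)`). -/
theorem block_structure_satisfies_min_up_down
    (T L l K : ℕ) (hT : 1 ≤ T) (hL : 1 ≤ L) (hl : 1 ≤ l) (hK : 1 ≤ K)
    (tb : ℕ → ℕ) (v : ℕ → Bool) (y : ℕ → ℕ)
    (htb1 : tb 1 = 1) (htbK : tb (K + 1) = T + 1)
    (hmono : ∀ k, 1 ≤ k → k ≤ K → tb k < tb (k + 1))
    (halt : ∀ k, 1 ≤ k → k ≤ K - 1 → v (k + 1) = !(v k))
    (hy0 : y 0 = 0)
    (hyblock : ∀ k, 1 ≤ k → k ≤ K → ∀ i, tb k ≤ i → i < tb (k + 1) →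
      y i = if v k then 1 else 0)
    (hupLen : ∀ k, 1 ≤ k → k + 1 ≤ K → v k = true → L ≤ tb (k + 1) - tb k)
    (hdownLen : ∀ k, 2 ≤ k → k + 1 ≤ K → v k = false → l ≤ tb (k + 1) - tb k) :
    (∀ t, L ≤ t → t ≤ T →
      (∑ τ ∈ Finset.Icc (t - L + 1) t, (y τ - y (τ - 1))) ≤ y t) ∧
    (∀ t, l ≤ t → t ≤ T →
      (∑ τ ∈ Finset.Icc (t - l + 1) t, (y (τ - 1) - y τ)) ≤ 1 - y t) := by
  -- strict monotonicity of tb on [1, K+1]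
  have hmonoLt : ∀ b a, 1 ≤ a → a < b → b ≤ K + 1 → tb a < tb b := by
    intro b
    induction b with
    | zero => intro a _ h _; omega
    | succ n ih =>
      intro a ha hab hb
      rcases Nat.lt_or_ge a n with h | h
      · exact lt_trans (ih a ha h (by omega)) (hmono n (by omega) (by omega))
      · have heq : a = n := by omega
        subst heq
        exact hmono a ha (by omega)
  have hmonoLe : ∀ a b, 1 ≤ a → a ≤ b → b ≤ K + 1 → tb a ≤ tb b := by
    intro a b ha hab hb
    rcases Nat.eq_or_lt_of_le hab with h | h
    · rw [h]
    · exact le_of_lt (hmonoLt b a ha h hb)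
  -- every stage 1 ≤ i ≤ T lies in a unique block
  have hblock : ∀ i, 1 ≤ i → i ≤ T → ∃ k, 1 ≤ k ∧ k ≤ K ∧ tb k ≤ i ∧ i < tb (k + 1) := by
    intro i hi hiT
    classical
    set S := (Finset.Icc 1 K).filter (fun j => tb j ≤ i) with hS
    have h1S : 1 ∈ S := by
      simp only [hS, Finset.mem_filter, Finset.mem_Icc]
      exact ⟨⟨le_refl 1, hK⟩, by omega⟩
    have hne : S.Nonempty := ⟨1, h1S⟩
    set k := S.max' hne with hk
    have hkS : k ∈ S := S.max'_mem hne
    simp only [hS, Finset.mem_filter, Finset.mem_Icc] at hkS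
    obtain ⟨⟨hk1, hkK⟩, hki⟩ := hkS
    refine ⟨k, hk1, hkK, hki, ?_⟩
    by_contra h
    push_neg at h
    have hkK' : k + 1 ≤ K := by
      by_contra hc
      have hek : k = K := by omega
      rw [hek, htbK] at h
      omega
    have hmem : k + 1 ∈ S := by
      simp only [hS, Finset.mem_filter, Finset.mem_Icc]
      exact ⟨⟨by omega, hkK'⟩, h⟩
    have := S.le_max' _ hmem
    omega
  -- y takes values ≤ 1
  have hy01 : ∀ i, i ≤ T → y i ≤ 1 := by
    intro i hiT
    rcases Nat.eq_zero_or_pos i with h | h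
    · rw [h, hy0]; omega
    · obtain ⟨k, hk1, hkK, h1, h2⟩ := hblock i h hiT
      rw [hyblock k hk1 hkK i h1 h2]
      split <;> omega
  -- start-up characterization
  have hstart : ∀ τ, 1 ≤ τ → τ ≤ T → y τ - y (τ - 1) ≠ 0 →
      ∃ j, 1 ≤ j ∧ j ≤ K ∧ τ = tb j ∧ v j = true := by
    intro τ h1 h2 hne
    obtain ⟨j, hj1, hjK, hb1, hb2⟩ := hblock τ h1 h2
    have hyτ := hyblock j hj1 hjK τ hb1 hb2
    have hvt : v j = true := by
      cases hvj : v j with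
      | false => rw [hvj] at hyτ; simp at hyτ; omega
      | true => rfl
    refine ⟨j, hj1, hjK, ?_, hvt⟩
    by_contra h
    have hlt : tb j < τ := lt_of_le_of_ne hb1 (fun he => h he.symm)
    have hprev : y (τ - 1) = 1 := by
      rw [hyblock j hj1 hjK (τ - 1) (by omega) (by omega), hvt]; simp
    rw [hvt] at hyτ; simp at hyτ
    omega
  -- shut-down characterization
  have hstop : ∀ τ, 1 ≤ τ → τ ≤ T → y (τ - 1) - y τ ≠ 0 →
      ∃ j, 2 ≤ j ∧ j ≤ K ∧ τ = tb j ∧ v j = false := by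
    intro τ h1 h2 hne
    obtain ⟨j, hj1, hjK, hb1, hb2⟩ := hblock τ h1 h2
    have hyτ := hyblock j hj1 hjK τ hb1 hb2
    have hprev1 : y (τ - 1) ≤ 1 := hy01 (τ - 1) (by omega)
    have hvt : v j = false := by
      cases hvj : v j with
      | true => rw [hvj] at hyτ; simp at hyτ; omega
      | false => rfl
    have hτj : τ = tb j := by
      by_contra h
      have hlt : tb j < τ := lt_of_le_of_ne hb1 (fun he => h he.symm)
      have hprev : y (τ - 1) = 0 := by
        rw [hyblock j hj1 hjK (τ - 1) (by omega) (by omega), hvt]; simp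
      omega
    have hj2 : 2 ≤ j := by
      by_contra h
      have hej : j = 1 := by omega
      rw [hej, htb1] at hτj
      rw [hτj] at hne
      simp [hy0] at hne
    exact ⟨j, hj2, hjK, hτj, hvt⟩
  constructor
  · -- min up-time constraint
    intro t htL htT
    obtain ⟨k, hk1, hkK, hbk1, hbk2⟩ := hblock t (by omega) htT
    have hyt := hyblock k hk1 hkK t hbk1 hbk2
    cases hv : v k with
    | false =>
      have hyt0 : y t = 0 := by rw [hyt, hv]; simp
      have hsum : ∑ τ ∈ Finset.Icc (t - L + 1) t, (y τ - y (τ - 1)) = 0 := by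
        apply Finset.sum_eq_zero
        intro τ hτ
        simp only [Finset.mem_Icc] at hτ
        by_contra hne
        obtain ⟨j, hj1, hjK, hje, hjv⟩ := hstart τ (by omega) (by omega) hne
        have hjk : j < k := by
          by_contra hc
          push_neg at hc
          have hne2 : j ≠ k := by
            intro he; rw [he, hv] at hjv; exact absurd hjv (by simp)
          have hlek : k + 1 ≤ j := by omega
          have := hmonoLe (k + 1) j (by omega) hlek (by omega)
          omega
        have hL2 := hupLen j hj1 (by omega) hjv
        have h3 := hmonoLe (j + 1) k (by omega) (by omega) (by omega)
        have h4 := hmono j hj1 (by omega)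
        omega
      omega
    | true =>
      have hyt1 : y t = 1 := by rw [hyt, hv]; simp
      have hsum : ∑ τ ∈ Finset.Icc (t - L + 1) t, (y τ - y (τ - 1)) ≤ 1 := by
        apply sum_le_one_of_unique
        · intro τ hτ
          simp only [Finset.mem_Icc] at hτ
          have := hy01 τ (by omega)
          omega
        · intro τ1 hτ1 τ2 hτ2 h1 h2
          simp only [Finset.mem_Icc] at hτ1 hτ2
          obtain ⟨j1, hj11, hj1K, hje1, hjv1⟩ := hstart τ1 (by omega) (by omega) h1
          obtain ⟨j2, hj21, hj2K, hje2, hjv2⟩ := hstart τ2 (by omega) (by omega) h2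
          rcases lt_trichotomy j1 j2 with h | h | h
          · exfalso
            have hL2 := hupLen j1 hj11 (by omega) hjv1
            have h3 := hmonoLe (j1 + 1) j2 (by omega) (by omega) (by omega)
            have h4 := hmono j1 hj11 (by omega)
            omega
          · rw [hje1, hje2, h]
          · exfalso
            have hL2 := hupLen j2 hj21 (by omega) hjv2
            have h3 := hmonoLe (j2 + 1) j1 (by omega) (by omega) (by omega)
            have h4 := hmono j2 hj21 (by omega)
            omega
      omega
  · -- min down-time constraint
    intro t htl htT
    obtain ⟨k, hk1, hkK, hbk1, hbk2⟩ := hblock t (by omega) htT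
    have hyt := hyblock k hk1 hkK t hbk1 hbk2
    cases hv : v k with
    | true =>
      have hyt1 : y t = 1 := by rw [hyt, hv]; simp
      have hsum : ∑ τ ∈ Finset.Icc (t - l + 1) t, (y (τ - 1) - y τ) = 0 := by
        apply Finset.sum_eq_zero
        intro τ hτ
        simp only [Finset.mem_Icc] at hτ
        by_contra hne
        obtain ⟨j, hj2, hjK, hje, hjv⟩ := hstop τ (by omega) (by omega) hne
        have hjk : j < k := by
          by_contra hc
          push_neg at hc
          have hne2 : j ≠ k := by
            intro he; rw [he, hv] at hjv; exact absurd hjv (by simp)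
          have hlek : k + 1 ≤ j := by omega
          have := hmonoLe (k + 1) j (by omega) hlek (by omega)
          omega
        have hl2 := hdownLen j hj2 (by omega) hjv
        have h3 := hmonoLe (j + 1) k (by omega) (by omega) (by omega)
        have h4 := hmono j (by omega) (by omega)
        omega
      omega
    | false =>
      have hyt0 : y t = 0 := by rw [hyt, hv]; simp
      have hsum : ∑ τ ∈ Finset.Icc (t - l + 1) t, (y (τ - 1) - y τ) ≤ 1 := by
        apply sum_le_one_of_unique
        · intro τ hτ
          simp only [Finset.mem_Icc] at hτ
          have := hy01 (τ - 1) (by omega)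
          omega
        · intro τ1 hτ1 τ2 hτ2 h1 h2
          simp only [Finset.mem_Icc] at hτ1 hτ2
          obtain ⟨j1, hj12, hj1K, hje1, hjv1⟩ := hstop τ1 (by omega) (by omega) h1
          obtain ⟨j2, hj22, hj2K, hje2, hjv2⟩ := hstop τ2 (by omega) (by omega) h2
          rcases lt_trichotomy j1 j2 with h | h | h
          · exfalso
            have hl2 := hdownLen j1 hj12 (by omega) hjv1
            have h3 := hmonoLe (j1 + 1) j2 (by omega) (by omega) (by omega)
            have h4 := hmono j1 (by omega) (by omega)
            omega
          · rw [hje1, hje2, h]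
          · exfalso
            have hl2 := hdownLen j2 hj22 (by omega) hjv2
            have h3 := hmonoLe (j2 + 1) j1 (by omega) (by omega) (by omega)
            have h4 := hmono j2 (by omega) (by omega)
            omega
      omega
end
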